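/- Under the expected smoothness assumption and the teacher-proximity condition f(θ) - f* ≤ σ(x*)σ(θ)/L_exp, the variance-reduction ratio satisfies 1 - ρ²(x*,θ)(1-β(θ))/(1+β(θ)/(cγ)) ≤ (2L_exp/(σ(x*)σ(θ)) + (2L/(cγσ²(θ)))) (f(θ) - f*), where σ²(x) = E[‖∇f_ξ(x)‖²]. -/

import Mathlib

/-!
Write `S = E⟨A, B⟩`. Since `A` is centred, `S` is the covariance of `A` and `B`, so Cauchy–Schwarz
gives `S² ≤ σA² (σB² - ‖g‖²)`; this identifies `ρ² (1 - β)` with `S² / (σA² σB²)` and bounds it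
by `1`. Expanding the expected smoothness term, `E‖B - A‖² = σA² + σB² - 2S`, and
`1 - S² / (σA² σB²) ≤ (σA² + σB² - 2S) / (σA σB)` because the difference is
`(σA σB (σA - σB)² + (σA σB - S)²) / (σA² σB²)`. Finally `1 - K / (1 + t) ≤ (1 - K) + t` for
`K ≤ 1`, `t ≥ 0`, and `t = β / (cγ)` is controlled by `‖g‖² ≤ 2 L D`.
-/

open MeasureTheory
open scoped RealInnerProductSpace

section RandomVectors

variable {Ω E : Type*} [MeasurableSpace Ω] {μ : Measure Ω}
  [NormedAddCommGroup E] [InnerProductSpace ℝ E] {X Y : Ω → E}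

theorem integrable_norm_sub_sq (hX : Integrable (fun ω => ‖X ω‖ ^ 2) μ)
    (hY : Integrable (fun ω => ‖Y ω‖ ^ 2) μ) (hXY : Integrable (fun ω => ⟪X ω, Y ω⟫) μ) :
    Integrable (fun ω => ‖Y ω - X ω‖ ^ 2) μ :=
  ((hY.add hX).sub (hXY.const_mul 2)).congr <| ae_of_all _ fun ω => by
    simp only [Pi.add_apply, Pi.sub_apply]
    rw [norm_sub_sq_real, real_inner_comm]; ring

theorem integral_norm_sub_sq (hX : Integrable (fun ω => ‖X ω‖ ^ 2) μ)
    (hY : Integrable (fun ω => ‖Y ω‖ ^ 2) μ) (hXY : Integrable (fun ω => ⟪X ω, Y ω⟫) μ) :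
    ∫ ω, ‖Y ω - X ω‖ ^ 2 ∂μ
      = ∫ ω, ‖Y ω‖ ^ 2 ∂μ + ∫ ω, ‖X ω‖ ^ 2 ∂μ - 2 * ∫ ω, ⟪X ω, Y ω⟫ ∂μ := by
  have hpt : ∀ ω, ‖Y ω - X ω‖ ^ 2 = ‖Y ω‖ ^ 2 + ‖X ω‖ ^ 2 - 2 * ⟪X ω, Y ω⟫ := fun ω => by
    rw [norm_sub_sq_real, real_inner_comm]; ring
  have hYX : Integrable (fun ω => ‖Y ω‖ ^ 2 + ‖X ω‖ ^ 2) μ := hY.add hX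
  simp_rw [hpt]
  rw [integral_sub hYX (hXY.const_mul 2), integral_add hY hX, integral_const_mul]

theorem sq_integral_inner_le (hX : Integrable (fun ω => ‖X ω‖ ^ 2) μ)
    (hY : Integrable (fun ω => ‖Y ω‖ ^ 2) μ) (hXY : Integrable (fun ω => ⟪X ω, Y ω⟫) μ) :
    (∫ ω, ⟪X ω, Y ω⟫ ∂μ) ^ 2 ≤ (∫ ω, ‖X ω‖ ^ 2 ∂μ) * ∫ ω, ‖Y ω‖ ^ 2 ∂μ := by
  have hquad : ∀ t : ℝ, 0 ≤ (∫ ω, ‖X ω‖ ^ 2 ∂μ) * (t * t)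
      + 2 * (∫ ω, ⟪X ω, Y ω⟫ ∂μ) * t + ∫ ω, ‖Y ω‖ ^ 2 ∂μ := fun t => by
    have hpt : ∀ ω, ‖t • X ω + Y ω‖ ^ 2
        = t ^ 2 * ‖X ω‖ ^ 2 + 2 * t * ⟪X ω, Y ω⟫ + ‖Y ω‖ ^ 2 := fun ω => by
      rw [norm_add_sq_real, real_inner_smul_left, norm_smul, Real.norm_eq_abs, mul_pow, sq_abs]
      ring
    have hXXY : Integrable (fun ω => t ^ 2 * ‖X ω‖ ^ 2 + 2 * t * ⟪X ω, Y ω⟫) μ :=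
      (hX.const_mul _).add (hXY.const_mul _)
    have hint : ∫ ω, ‖t • X ω + Y ω‖ ^ 2 ∂μ = t ^ 2 * (∫ ω, ‖X ω‖ ^ 2 ∂μ)
        + 2 * t * (∫ ω, ⟪X ω, Y ω⟫ ∂μ) + ∫ ω, ‖Y ω‖ ^ 2 ∂μ := by
      simp_rw [hpt]
      rw [integral_add hXXY hY, integral_add (hX.const_mul _) (hXY.const_mul _),
        integral_const_mul, integral_const_mul]
    have h : 0 ≤ ∫ ω, ‖t • X ω + Y ω‖ ^ 2 ∂μ := integral_nonneg fun ω => sq_nonneg _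
    linarith
  have h := discrim_le_zero hquad
  rw [discrim] at h
  linarith

variable [CompleteSpace E] [IsProbabilityMeasure μ]

theorem integral_norm_sub_integral_sq (hY : Integrable Y μ)
    (hY2 : Integrable (fun ω => ‖Y ω‖ ^ 2) μ) :
    ∫ ω, ‖Y ω - ∫ ω', Y ω' ∂μ‖ ^ 2 ∂μ = ∫ ω, ‖Y ω‖ ^ 2 ∂μ - ‖∫ ω, Y ω ∂μ‖ ^ 2 := by
  rw [integral_norm_sub_sq (X := fun _ => ∫ ω, Y ω ∂μ) (integrable_const _) hY2
    (hY.const_inner _), integral_inner hY, real_inner_self_eq_norm_sq, integral_const,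
    probReal_univ, one_smul]
  ring

theorem sq_integral_inner_le_of_integral_eq_zero (hX : Integrable X μ)
    (hX2 : Integrable (fun ω => ‖X ω‖ ^ 2) μ) (hX0 : ∫ ω, X ω ∂μ = 0) (hY : Integrable Y μ)
    (hY2 : Integrable (fun ω => ‖Y ω‖ ^ 2) μ) (hXY : Integrable (fun ω => ⟪X ω, Y ω⟫) μ) :
    (∫ ω, ⟪X ω, Y ω⟫ ∂μ) ^ 2
      ≤ (∫ ω, ‖X ω‖ ^ 2 ∂μ) * (∫ ω, ‖Y ω‖ ^ 2 ∂μ - ‖∫ ω, Y ω ∂μ‖ ^ 2) := by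
  set m := ∫ ω, Y ω ∂μ
  have hXm : Integrable (fun ω => ⟪X ω, m⟫) μ := hX.inner_const m
  have hcov : ∫ ω, ⟪X ω, Y ω⟫ ∂μ = ∫ ω, ⟪X ω, Y ω - m⟫ ∂μ := by
    simp_rw [inner_sub_right]
    rw [integral_sub hXY hXm]
    simp_rw [real_inner_comm m]
    rw [integral_inner hX, hX0, inner_zero_right, sub_zero]
  have hYm2 : Integrable (fun ω => ‖Y ω - m‖ ^ 2) μ :=
    integrable_norm_sub_sq (integrable_const _) hY2 (hY.const_inner m)
  have hXYm : Integrable (fun ω => ⟪X ω, Y ω - m⟫) μ := by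
    simp_rw [inner_sub_right]; exact hXY.sub hXm
  rw [hcov, ← integral_norm_sub_integral_sq hY hY2]
  exact sq_integral_inner_le hX2 hYm2 hXYm

end RandomVectors

theorem one_sub_sq_div_le {a b S : ℝ} (ha : 0 < a) (hb : 0 < b) :
    1 - S ^ 2 / (a ^ 2 * b ^ 2) ≤ (a ^ 2 + b ^ 2 - 2 * S) / (a * b) := by
  rw [← sub_nonneg]
  have key : (a ^ 2 + b ^ 2 - 2 * S) / (a * b) - (1 - S ^ 2 / (a ^ 2 * b ^ 2))
      = (a * b * (a - b) ^ 2 + (a * b - S) ^ 2) / (a ^ 2 * b ^ 2) := by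
    field_simp; ring
  rw [key]
  positivity

theorem sq_div_mul_sqrt_mul_one_sub_div {a b S w : ℝ} (ha : 0 < a) (hb : 0 < b)
    (hS : S ^ 2 ≤ a ^ 2 * (b ^ 2 - w)) :
    (S / (a * √(b ^ 2 - w))) ^ 2 * (1 - w / b ^ 2) = S ^ 2 / (a ^ 2 * b ^ 2) := by
  have hv : 0 ≤ b ^ 2 - w := nonneg_of_mul_nonneg_right (hS.trans' (sq_nonneg S)) (by positivity)
  rcases hv.eq_or_lt with hv0 | hvpos
  · -- here `√0 = 0` gives the left side the junk value `0`, but then also `S = 0`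
    have hS0 : S = 0 := by
      rw [← hv0, mul_zero] at hS
      exact pow_eq_zero_iff two_ne_zero |>.mp (le_antisymm hS (sq_nonneg S))
    simp [hS0]
  · rw [div_pow, mul_pow, Real.sq_sqrt hvpos.le]
    field_simp

theorem one_sub_div_one_add_le {K t R : ℝ} (hK : K ≤ 1) (ht : 0 ≤ t) (hR : 1 - K ≤ R) :
    1 - K / (1 + t) ≤ R + t := by
  have h1t : 0 < 1 + t := by linarith
  rw [sub_le_iff_le_add, ← sub_le_iff_le_add', le_div_iff₀ h1t]
  nlinarith

theorem variance_reduction_factor_bound_general {d : ℕ} {Ω : Type*} [MeasureSpace Ω]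
    (P : Measure Ω) [IsProbabilityMeasure P]
    -- A ω = ∇f_ξ(x*), B ω = ∇f_ξ(θ)
    (A B : Ω → EuclideanSpace ℝ (Fin d))
    (hA2 : Integrable (fun ω => ‖A ω‖ ^ 2) P)
    (hB2 : Integrable (fun ω => ‖B ω‖ ^ 2) P)
    (hAB : Integrable (fun ω => (inner ℝ (A ω) (B ω) : ℝ)) P)
    (hAint : Integrable A P) (hBint : Integrable B P)
    (hAmean : ∫ ω, A ω ∂P = 0)
    (g : EuclideanSpace ℝ (Fin d)) (hg : g = ∫ ω, B ω ∂P)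
    (σA σB : ℝ)
    (hσA : σA = Real.sqrt (∫ ω, ‖A ω‖ ^ 2 ∂P))
    (hσB : σB = Real.sqrt (∫ ω, ‖B ω‖ ^ 2 ∂P))
    (hApos : 0 < ∫ ω, ‖A ω‖ ^ 2 ∂P)
    (hBpos : 0 < ∫ ω, ‖B ω‖ ^ 2 ∂P)
    (L Lexp c γ : ℝ) (hc : 0 < c) (hγ : 0 < γ)
    -- D = f(θ) - f*
    (D : ℝ)
    -- expected smoothness between θ and x*
    (hES : ∫ ω, ‖B ω - A ω‖ ^ 2 ∂P ≤ 2 * Lexp * D)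
    -- L-smoothness consequence
    (hgL : ‖g‖ ^ 2 ≤ 2 * L * D)
    (β : ℝ) (hβ : β = ‖g‖ ^ 2 / σB ^ 2)
    (ρ : ℝ) (hρ : ρ = (∫ ω, (inner ℝ (A ω) (B ω) : ℝ) ∂P) /
      (σA * Real.sqrt (σB ^ 2 - ‖g‖ ^ 2))) :
    1 - ρ ^ 2 * (1 - β) / (1 + β / (c * γ))
      ≤ (2 * Lexp / (σA * σB) + 2 * L / (c * γ * σB ^ 2)) * D := by
  have ha : 0 < σA := hσA ▸ Real.sqrt_pos.mpr hApos
  have hb : 0 < σB := hσB ▸ Real.sqrt_pos.mpr hBpos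
  have ha2 : ∫ ω, ‖A ω‖ ^ 2 ∂P = σA ^ 2 := by rw [hσA, Real.sq_sqrt hApos.le]
  have hb2 : ∫ ω, ‖B ω‖ ^ 2 ∂P = σB ^ 2 := by rw [hσB, Real.sq_sqrt hBpos.le]
  set S := ∫ ω, ⟪A ω, B ω⟫ ∂P
  have hcov : S ^ 2 ≤ σA ^ 2 * (σB ^ 2 - ‖g‖ ^ 2) := by
    rw [← ha2, ← hb2, hg]
    exact sq_integral_inner_le_of_integral_eq_zero hAint hA2 hAmean hBint hB2 hAB
  have hρβ : ρ ^ 2 * (1 - β) = S ^ 2 / (σA ^ 2 * σB ^ 2) := by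
    rw [hρ, hβ]
    exact sq_div_mul_sqrt_mul_one_sub_div ha hb hcov
  have hK : S ^ 2 / (σA ^ 2 * σB ^ 2) ≤ 1 := by
    rw [div_le_one (by positivity)]
    nlinarith [sq_nonneg ‖g‖]
  have hSmooth : 1 - S ^ 2 / (σA ^ 2 * σB ^ 2) ≤ 2 * Lexp * D / (σA * σB) := by
    rw [integral_norm_sub_sq hA2 hB2 hAB, ha2, hb2, add_comm (σB ^ 2)] at hES
    exact (one_sub_sq_div_le ha hb).trans (div_le_div_of_nonneg_right hES (by positivity))
  have hβ_le : β / (c * γ) ≤ 2 * L * D / (c * γ * σB ^ 2) := by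
    rw [hβ, div_div, mul_comm (σB ^ 2)]
    exact div_le_div_of_nonneg_right hgL (by positivity)
  calc 1 - ρ ^ 2 * (1 - β) / (1 + β / (c * γ))
      ≤ 2 * Lexp * D / (σA * σB) + β / (c * γ) := by
        rw [hρβ]
        exact one_sub_div_one_add_le hK (by rw [hβ]; positivity) hSmooth
    _ ≤ 2 * Lexp * D / (σA * σB) + 2 * L * D / (c * γ * σB ^ 2) := by gcongr
    _ = (2 * Lexp / (σA * σB) + 2 * L / (c * γ * σB ^ 2)) * D := by ring

theorem variance_reduction_factor_bound {d : ℕ} {Ω : Type*} [MeasureSpace Ω]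
    (P : Measure Ω) [IsProbabilityMeasure P]
    -- A ω = ∇f_ξ(x*), B ω = ∇f_ξ(θ)
    (A B : Ω → EuclideanSpace ℝ (Fin d))
    (hA2 : Integrable (fun ω => ‖A ω‖ ^ 2) P)
    (hB2 : Integrable (fun ω => ‖B ω‖ ^ 2) P)
    (hAB : Integrable (fun ω => (inner ℝ (A ω) (B ω) : ℝ)) P)
    (hABdiff : Integrable (fun ω => ‖B ω - A ω‖ ^ 2) P)
    (hAint : Integrable A P) (hBint : Integrable B P)
    (hAmean : ∫ ω, A ω ∂P = 0)
    (g : EuclideanSpace ℝ (Fin d)) (hg : g = ∫ ω, B ω ∂P)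
    (σA σB : ℝ)
    (hσA : σA = Real.sqrt (∫ ω, ‖A ω‖ ^ 2 ∂P))
    (hσB : σB = Real.sqrt (∫ ω, ‖B ω‖ ^ 2 ∂P))
    (hApos : 0 < ∫ ω, ‖A ω‖ ^ 2 ∂P)
    (hBpos : 0 < ∫ ω, ‖B ω‖ ^ 2 ∂P)
    (L Lexp c γ : ℝ) (hL : 0 < L) (hLexp : 0 < Lexp) (hc : 0 < c) (hγ : 0 < γ)
    -- D = f(θ) - f*
    (D : ℝ) (hD : 0 ≤ D)
    -- expected smoothness between θ and x*
    (hES : ∫ ω, ‖B ω - A ω‖ ^ 2 ∂P ≤ 2 * Lexp * D)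
    -- L-smoothness consequence
    (hgL : ‖g‖ ^ 2 ≤ 2 * L * D)
    -- teacher proximity
    (hprox : D ≤ σA * σB / Lexp)
    (β : ℝ) (hβ : β = ‖g‖ ^ 2 / σB ^ 2)
    (ρ : ℝ) (hρ : ρ = (∫ ω, (inner ℝ (A ω) (B ω) : ℝ) ∂P) /
      (σA * Real.sqrt (σB ^ 2 - ‖g‖ ^ 2))) :
    1 - ρ ^ 2 * (1 - β) / (1 + β / (c * γ))
      ≤ (2 * Lexp / (σA * σB) + 2 * L / (c * γ * σB ^ 2)) * D :=
  variance_reduction_factor_bound_general P A B hA2 hB2 hAB hAint hBint hAmean g hg σA σB hσA hσB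
    hApos hBpos L Lexp c γ hc hγ D hES hgL β hβ ρ hρ
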